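/- arXiv:2509.05811 — 10 statements merged into one kernel-verified Lean document; each statement's English description precedes it below -/
import Mathlib

section
/- For every real K > 0 and integer m ≥ 2, it holds that 1 − (1 − 2/m)^K ≥ 2K/(m + 2K). -/
/-- For every real `K > 0` and integer `m ≥ 2`, `1 − (1 − 2/m)^K ≥ 2K/(m + 2K)`. -/
theorem one_sub_pow_ge (K : ℝ) (hK : 0 < K) (m : ℕ) (hm : 2 ≤ m) :
    1 - (1 - 2 / (m : ℝ)) ^ K ≥ 2 * K / ((m : ℝ) + 2 * K) := by
  have hm0 : (0:ℝ) < m := by exact_mod_cast Nat.lt_of_lt_of_le two_pos hm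
  have hm2 : (2:ℝ) ≤ m := by exact_mod_cast hm
  set t : ℝ := 2 / (m : ℝ) with ht
  have ht0 : 0 < t := by positivity
  have ht1 : t ≤ 1 := by rw [ht, div_le_one hm0]; linarith
  have h1 : (1 - t) ^ K ≤ Real.exp (-t) ^ K := by
    apply Real.rpow_le_rpow (by linarith)
    · have := Real.add_one_le_exp (-t); linarith
    · exact hK.le
  have h2 : Real.exp (-t) ^ K = Real.exp (-(t * K)) := by
    rw [← Real.exp_mul]; ring_nf
  have h3 : Real.exp (-(t * K)) ≤ 1 / (1 + t * K) := by
    rw [Real.exp_neg, one_div]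
    have hpos : 0 < 1 + t * K := by positivity
    have := Real.add_one_le_exp (t * K)
    exact inv_anti₀ hpos (by linarith)
  have h4 : (1 - t) ^ K ≤ 1 / (1 + t * K) := by
    calc (1 - t) ^ K ≤ Real.exp (-t) ^ K := h1
    _ = Real.exp (-(t * K)) := h2
    _ ≤ 1 / (1 + t * K) := h3
  have heq : 1 - 1 / (1 + t * K) = 2 * K / ((m : ℝ) + 2 * K) := by
    rw [ht]
    have h1 : (1 : ℝ) + 2 / m * K ≠ 0 := by positivity
    have h2 : (m : ℝ) + 2 * K ≠ 0 := by positivity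
    field_simp
    ring
  linarith [h4, heq.symm.le]
end

section
/- Let a, ε > 0, n ≥ m ≥ 2, a = (m−1)ε, and define a sequence x_k ∈ ℝⁿ by x₁ = (a, ε, …, ε, 0, …, 0) (with ε in coordinates 2,…,m) and the recursion x_{k+1} = x_k − ((∑_{i=1}^m |x_{k,i}|)/m)·(sign(x_{k,1}), …, sign(x_{k,m}), 0, …, 0). Then for every k ≥ 1, the first coordinate satisfies x_{k,1} = a(1 − 2/m)^{k−1}, and for each 1 < i ≤ m, x_{k,i} = ε(−1)^{k−1}(1 − 2/m)^{k−1}. -/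
/-- Closed form of the iterates of the Equal-Weights lower-bound construction:
starting from `x₁ = (a, ε, …, ε, 0, …, 0)` with `a = (m−1)ε`, and the recursion
`x_{k+1} = x_k − ((∑_{i<m} |x_{k,i}|)/m)·(sign(x_{k,1}),…,sign(x_{k,m}),0,…,0)`,
the first coordinate is `a(1−2/m)^{k−1}` and coordinates `1 < i ≤ m` equal
`ε(−1)^{k−1}(1−2/m)^{k−1}`. -/
theorem lower_bound_recursion_closed_form {n m : ℕ} (hm : 2 ≤ m) (hmn : m ≤ n)
    (a ε : ℝ) (ha : 0 < a) (hε : 0 < ε) (hae : a = ((m : ℝ) - 1) * ε)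
    (x : ℕ → Fin n → ℝ)
    (hx1 : ∀ j : Fin n, x 1 j = if (j : ℕ) = 0 then a else if (j : ℕ) < m then ε else 0)
    (hrec : ∀ k, 1 ≤ k → ∀ j : Fin n,
      x (k + 1) j = x k j -
        ((∑ i ∈ Finset.univ.filter (fun i : Fin n => (i : ℕ) < m), |x k i|) / (m : ℝ)) *
          (if (j : ℕ) < m then Real.sign (x k j) else 0)) :
    ∀ k, 1 ≤ k → ∀ j : Fin n,
      ((j : ℕ) = 0 → x k j = a * (1 - 2 / (m : ℝ)) ^ (k - 1)) ∧
      (0 < (j : ℕ) → (j : ℕ) < m →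
        x k j = ε * (-1 : ℝ) ^ (k - 1) * (1 - 2 / (m : ℝ)) ^ (k - 1)) := by
  have hm2 : (2:ℝ) ≤ (m:ℝ) := by exact_mod_cast hm
  have hmpos : (0:ℝ) < (m:ℝ) := by linarith
  set r : ℝ := 1 - 2 / (m:ℝ) with hrdef
  have hr0 : 0 ≤ r := by
    rw [hrdef, sub_nonneg, div_le_one hmpos]; exact hm2
  intro k hk
  induction k with
  | zero => omega
  | succ k ih =>
    rcases Nat.lt_or_ge k 1 with h1 | hk1
    · -- base case k = 0
      interval_cases k
      intro j
      refine ⟨fun hj => ?_, fun hj1 hj2 => ?_⟩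
      · simp [hx1 j, hj]
      · rw [hx1 j]
        simp [Nat.pos_iff_ne_zero.mp hj1, hj2]
    · -- inductive step
      have IH := ih hk1
      -- the sum
      have hfil : (Finset.univ.filter (fun i : Fin n => (i : ℕ) < m)) =
          Finset.map ⟨Fin.castLE hmn, Fin.castLE_injective hmn⟩ Finset.univ := by
        ext j
        simp only [Finset.mem_filter, Finset.mem_univ, true_and, Finset.mem_map,
          Function.Embedding.coeFn_mk]
        constructor
        · intro hj
          exact ⟨⟨(j:ℕ), hj⟩, by ext; simp⟩
        · rintro ⟨i, rfl⟩
          simp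
      have habs : ∀ i : Fin n, (i:ℕ) < m →
          |x k i| = (if (i:ℕ) = 0 then a else ε) * r ^ (k-1) := by
        intro i hi
        by_cases h0 : (i:ℕ) = 0
        · rw [(IH i).1 h0, h0]
          simp only [if_pos]
          rw [abs_of_nonneg (by positivity)]
        · rw [(IH i).2 (Nat.pos_of_ne_zero h0) hi, if_neg h0]
          rw [abs_mul, abs_mul, abs_pow, abs_pow, abs_neg, abs_one, one_pow, mul_one,
            abs_of_nonneg hε.le, abs_of_nonneg hr0]
      have hsum : (∑ i ∈ Finset.univ.filter (fun i : Fin n => (i : ℕ) < m), |x k i|)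
          = 2 * a * r ^ (k-1) := by
        rw [Finset.sum_congr rfl (fun i hi => habs i (by simpa using hi)), hfil,
          Finset.sum_map]
        simp only [Function.Embedding.coeFn_mk, Fin.coe_castLE]
        rw [← Finset.sum_mul]
        have : (∑ i : Fin m, if (i:ℕ) = 0 then a else ε) = 2 * a := by
          rw [Fin.sum_univ_eq_sum_range (fun t => if t = 0 then a else ε)]
          obtain ⟨m', rfl⟩ : ∃ m', m = m' + 1 := ⟨m - 1, by omega⟩
          rw [Finset.sum_range_succ']
          simp only [Nat.succ_ne_zero, if_false, if_pos rfl, Finset.sum_const,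
            Finset.card_range, nsmul_eq_mul]
          have : (m':ℝ) = (m':ℝ) + 1 - 1 := by ring
          rw [hae]
          push_cast
          ring
        rw [this]
      -- coordinate computations
      have hk' : k - 1 + 1 = k := by omega
      have hks : (k + 1) - 1 = k := by omega
      intro j
      by_cases hjm : (j:ℕ) < m
      · have hrec' := hrec k hk1 j
        rw [if_pos hjm, hsum] at hrec'
        rcases eq_or_lt_of_le (pow_nonneg hr0 (k-1)) with hz | hp
        · -- r^(k-1) = 0 : everything is 0
          have hz' : r ^ k = 0 := by
            rw [← hk', pow_succ, ← hz]; ring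
          refine ⟨fun hj0 => ?_, fun hj1 hj2 => ?_⟩
          · rw [hrec', (IH j).1 hj0, ← hz, hks, hz']
            ring
          · rw [hrec', (IH j).2 hj1 hjm, ← hz, hks, hz']
            ring
        · refine ⟨fun hj0 => ?_, fun hj1 hj2 => ?_⟩
          · have hxk := (IH j).1 hj0
            have hpos : 0 < x k j := by rw [hxk]; positivity
            rw [hrec', Real.sign_of_pos hpos, hxk, hks, ← hk', pow_succ]
            simp only [Nat.add_sub_cancel]
            rw [hrdef]
            field_simp
          · have hxk := (IH j).2 hj1 hjm
            have hsign : Real.sign (x k j) = (-1:ℝ) ^ (k-1) := by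
              rcases Nat.even_or_odd (k-1) with he | ho
              · rw [he.neg_one_pow]
                have : 0 < x k j := by rw [hxk, he.neg_one_pow]; positivity
                exact Real.sign_of_pos this
              · rw [ho.neg_one_pow]
                have : x k j < 0 := by
                  rw [hxk, ho.neg_one_pow]
                  have : 0 < ε * r ^ (k-1) := by positivity
                  nlinarith
                exact Real.sign_of_neg this
            rw [hrec', hsign, hxk, hks, ← hk', pow_succ, pow_succ, hae, hrdef]
            simp only [Nat.add_sub_cancel]
            field_simp
            ring
      · -- j ≥ m : show contradiction impossible branches
        refine ⟨fun hj0 => absurd (hj0 ▸ (by omega : 0 < m)) (by omega), fun hj1 hj2 => absurd hj2 hjm⟩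
end

section
/- Let f₁,…,f_m : ℝⁿ → ℝ be convex, G-Lipschitz, aligned with common minimizer x⋆ (f_i(x⋆) = f_i⋆ for all i). Suppose the iterates x₁,…,x_K satisfy, for each k, ‖x_{k+1} − x⋆‖² ≤ ‖x_k − x⋆‖² − (f_{I(k)}(x_k) − f_{I(k)}⋆)²/‖∇f_{I(k)}(x_k)‖², where I(k) ∈ argmax_i(f_i(x_k) − f_i⋆). Then the average iterate x̄ = (1/K)∑ x_k satisfies max_{i∈[m]} (f_i(x̄) − f_i⋆) ≤ G‖x₁ − x⋆‖/√K. -/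
open InnerProductSpace in
lemma grad_ineq {E : Type*} [NormedAddCommGroup E] [InnerProductSpace ℝ E] [CompleteSpace E]
    {f : E → ℝ} {g x : E} (hf : ConvexOn ℝ Set.univ f) (hg : HasGradientAt f g x)
    (y : E) : f x + inner ℝ g (y - x) ≤ f y := by
  have hline : HasDerivAt (fun t : ℝ => f (AffineMap.lineMap x y t))
      (inner ℝ g (y - x) : ℝ) 0 := by
    have h1 : HasDerivAt (fun t : ℝ => AffineMap.lineMap x y t) (y - x) 0 :=
      AffineMap.hasDerivAt_lineMap
    have h2 : HasFDerivAt f ((InnerProductSpace.toDual ℝ E) g)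
        ((AffineMap.lineMap x y) (0:ℝ)) := by simpa using hg.hasFDerivAt
    have := h2.comp_hasDerivAt (x := (0:ℝ)) h1
    simpa [Function.comp_def] using this
  have hconv : ConvexOn ℝ Set.univ (fun t : ℝ => f (AffineMap.lineMap x y t)) := by
    have := hf.comp_affineMap (AffineMap.lineMap x y)
    simpa [Set.preimage_univ, Function.comp_def] using this
  have := hconv.le_slope_of_hasDerivAt (Set.mem_univ (0:ℝ)) (Set.mem_univ 1)
    zero_lt_one hline
  simp only [slope_def_field, AffineMap.lineMap_apply_zero, AffineMap.lineMap_apply_one] at this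
  have h3 : (inner ℝ g (y - x) : ℝ) ≤ f y - f x := by
    rw [div_eq_mul_inv] at this
    simpa using this
  linarith

/-- Lipschitz case of the trajectory-gap bound: convex `G`-Lipschitz aligned
functions, per-step Polyak-type decrease toward the common minimizer, `I(k)` the
argmax gap index; then the average iterate satisfies
`maxᵢ (fᵢ(x̄) − fᵢ⋆) ≤ G‖x₁ − x⋆‖/√K`. -/
theorem lipschitz_trajectory_gap_bound {n m K : ℕ} (hm : 0 < m) (hK : 1 ≤ K) (G : ℝ)
    (f : Fin m → EuclideanSpace ℝ (Fin n) → ℝ)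
    (f' : Fin m → EuclideanSpace ℝ (Fin n) → EuclideanSpace ℝ (Fin n))
    (hgrad : ∀ i x, HasGradientAt (f i) (f' i x) x)
    (hconv : ∀ i, ConvexOn ℝ Set.univ (f i))
    (hLip : ∀ i x, ‖f' i x‖ ≤ G)
    (xstar : EuclideanSpace ℝ (Fin n)) (haligned : ∀ i x, f i xstar ≤ f i x)
    (x : ℕ → EuclideanSpace ℝ (Fin n)) (I : ℕ → Fin m)
    (hI : ∀ k ∈ Finset.Icc 1 K, ∀ i,
      f i (x k) - f i xstar ≤ f (I k) (x k) - f (I k) xstar)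
    (hstep : ∀ k ∈ Finset.Icc 1 K,
      ‖x (k + 1) - xstar‖ ^ 2 ≤ ‖x k - xstar‖ ^ 2 -
        (f (I k) (x k) - f (I k) xstar) ^ 2 / ‖f' (I k) (x k)‖ ^ 2) :
    ∀ i, f i ((1 / (K : ℝ)) • ∑ k ∈ Finset.Icc 1 K, x k) - f i xstar
      ≤ G * ‖x 1 - xstar‖ / Real.sqrt K := by
  intro i
  have hG : 0 ≤ G := le_trans (norm_nonneg _) (hLip i xstar)
  set u : ℕ → ℝ := fun k => ‖x k - xstar‖ ^ 2 with hu
  set gap : ℕ → ℝ := fun k => f (I k) (x k) - f (I k) xstar with hgap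
  have hKpos : (0:ℝ) < K := by exact_mod_cast hK
  have hgap0 : ∀ k ∈ Finset.Icc 1 K, 0 ≤ gap k := fun k _ =>
    sub_nonneg.2 (haligned (I k) (x k))
  have key : ∀ k ∈ Finset.Icc 1 K, gap k ^ 2 ≤ G ^ 2 * (u k - u (k + 1)) := by
    intro k hk
    have hs := hstep k hk
    have hnn : 0 ≤ gap k ^ 2 / ‖f' (I k) (x k)‖ ^ 2 := by positivity
    have hdiff : gap k ^ 2 / ‖f' (I k) (x k)‖ ^ 2 ≤ u k - u (k + 1) := by
      simp only [hu]; linarith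
    have hud : 0 ≤ u k - u (k + 1) := le_trans hnn hdiff
    by_cases h0 : ‖f' (I k) (x k)‖ = 0
    · have hz : f' (I k) (x k) = 0 := norm_eq_zero.mp h0
      have hgi := grad_ineq (hconv (I k)) (hgrad (I k) (x k)) xstar
      rw [hz] at hgi
      simp only [inner_zero_left] at hgi
      have hzz : gap k = 0 := le_antisymm (by simp only [hgap]; linarith) (hgap0 k hk)
      rw [hzz]
      have hmn : (0:ℝ) ≤ G ^ 2 * (u k - u (k + 1)) := mul_nonneg (sq_nonneg G) hud
      simpa using hmn
    · have h1 : gap k ^ 2 = ‖f' (I k) (x k)‖ ^ 2 * (gap k ^ 2 / ‖f' (I k) (x k)‖ ^ 2) := by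
        field_simp
      have h2 : ‖f' (I k) (x k)‖ ^ 2 ≤ G ^ 2 :=
        pow_le_pow_left₀ (norm_nonneg _) (hLip (I k) (x k)) 2
      calc gap k ^ 2 = ‖f' (I k) (x k)‖ ^ 2 * (gap k ^ 2 / ‖f' (I k) (x k)‖ ^ 2) := h1
        _ ≤ G ^ 2 * (u k - u (k + 1)) :=
          mul_le_mul h2 hdiff hnn (by positivity)
  have htel : ∑ k ∈ Finset.Icc 1 K, (u k - u (k + 1)) = u 1 - u (K + 1) := by
    have hIcc : Finset.Icc 1 K = Finset.Ico 1 (K + 1) := by rw [Finset.Ico_add_one_right_eq_Icc]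
    rw [hIcc, Finset.sum_Ico_eq_sum_range]
    simp only [Nat.add_sub_cancel]
    have := Finset.sum_range_sub' (fun j => u (1 + j)) K
    simpa [add_assoc, add_comm, add_left_comm] using this
  have hS : ∑ k ∈ Finset.Icc 1 K, gap k ^ 2 ≤ G ^ 2 * u 1 := by
    calc ∑ k ∈ Finset.Icc 1 K, gap k ^ 2
        ≤ ∑ k ∈ Finset.Icc 1 K, G ^ 2 * (u k - u (k + 1)) := Finset.sum_le_sum key
      _ = G ^ 2 * (u 1 - u (K + 1)) := by rw [← Finset.mul_sum, htel]
      _ ≤ G ^ 2 * u 1 := by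
          have h4 : (0:ℝ) ≤ u (K + 1) := by positivity
          nlinarith [sq_nonneg G]
  have hCS : (∑ k ∈ Finset.Icc 1 K, gap k) ^ 2 ≤ K * ∑ k ∈ Finset.Icc 1 K, gap k ^ 2 := by
    have := sq_sum_le_card_mul_sum_sq (s := Finset.Icc 1 K) (f := gap)
    simpa [Nat.card_Icc] using this
  have hsum0 : 0 ≤ ∑ k ∈ Finset.Icc 1 K, gap k := Finset.sum_nonneg hgap0
  have hcard : (Finset.Icc 1 K).card = K := by simp [Nat.card_Icc]
  have hw1 : ∑ _k ∈ Finset.Icc 1 K, (1 / (K:ℝ)) = 1 := by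
    rw [Finset.sum_const, hcard, nsmul_eq_mul]
    field_simp
  have hJ : f i ((1 / (K : ℝ)) • ∑ k ∈ Finset.Icc 1 K, x k)
      ≤ ∑ k ∈ Finset.Icc 1 K, (1 / (K:ℝ)) * f i (x k) := by
    have := (hconv i).map_sum_le (t := Finset.Icc 1 K) (w := fun _ => 1 / (K:ℝ))
      (p := x) (fun _ _ => by positivity) hw1 (fun _ _ => Set.mem_univ _)
    simpa [Finset.smul_sum, smul_eq_mul] using this
  have hgapbd : f i ((1 / (K : ℝ)) • ∑ k ∈ Finset.Icc 1 K, x k) - f i xstar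
      ≤ (1 / (K:ℝ)) * ∑ k ∈ Finset.Icc 1 K, gap k := by
    have h1 : ∑ k ∈ Finset.Icc 1 K, (1 / (K:ℝ)) * f i (x k) - f i xstar
        = (1 / (K:ℝ)) * ∑ k ∈ Finset.Icc 1 K, (f i (x k) - f i xstar) := by
      rw [Finset.mul_sum]
      have hsplit : ∑ k ∈ Finset.Icc 1 K, (1 / (K:ℝ)) * (f i (x k) - f i xstar)
          = (∑ k ∈ Finset.Icc 1 K, (1 / (K:ℝ)) * f i (x k))
            - ∑ _k ∈ Finset.Icc 1 K, (1 / (K:ℝ)) * f i xstar := by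
        rw [← Finset.sum_sub_distrib]; congr 1; ext k; ring
      rw [hsplit, Finset.sum_const, hcard, nsmul_eq_mul]
      congr 1
      field_simp
    have h2 : (1 / (K:ℝ)) * ∑ k ∈ Finset.Icc 1 K, (f i (x k) - f i xstar)
        ≤ (1 / (K:ℝ)) * ∑ k ∈ Finset.Icc 1 K, gap k := by
      apply mul_le_mul_of_nonneg_left _ (by positivity)
      exact Finset.sum_le_sum fun k hk => hI k hk i
    linarith
  have hT : ∑ k ∈ Finset.Icc 1 K, gap k ≤ Real.sqrt K * (G * ‖x 1 - xstar‖) := by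
    have h1 : (∑ k ∈ Finset.Icc 1 K, gap k) ^ 2 ≤ K * (G ^ 2 * u 1) :=
      le_trans hCS (by nlinarith)
    have h2 : Real.sqrt ((∑ k ∈ Finset.Icc 1 K, gap k) ^ 2)
        ≤ Real.sqrt (K * (G ^ 2 * u 1)) := Real.sqrt_le_sqrt h1
    rw [Real.sqrt_sq hsum0] at h2
    have h3 : Real.sqrt (K * (G ^ 2 * u 1)) = Real.sqrt K * (G * ‖x 1 - xstar‖) := by
      rw [show (K:ℝ) * (G ^ 2 * u 1) = (K:ℝ) * (G * ‖x 1 - xstar‖) ^ 2 by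
        simp only [hu]; ring]
      rw [Real.sqrt_mul (le_of_lt hKpos), Real.sqrt_sq (by positivity)]
    rw [h3] at h2
    exact h2
  have hsqK : Real.sqrt K * Real.sqrt K = K := Real.mul_self_sqrt (le_of_lt hKpos)
  have hsqKpos : 0 < Real.sqrt K := Real.sqrt_pos.mpr hKpos
  calc f i ((1 / (K : ℝ)) • ∑ k ∈ Finset.Icc 1 K, x k) - f i xstar
      ≤ (1 / (K:ℝ)) * ∑ k ∈ Finset.Icc 1 K, gap k := hgapbd
    _ ≤ (1 / (K:ℝ)) * (Real.sqrt K * (G * ‖x 1 - xstar‖)) :=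
        mul_le_mul_of_nonneg_left hT (by positivity)
    _ = G * ‖x 1 - xstar‖ / Real.sqrt K := by
        field_simp
        nlinarith [hsqK]
end

section
/- Let f₁,…,f_m : ℝⁿ → ℝ be convex, β-smooth, aligned with common minimizer x⋆. Suppose for each k the iterates satisfy ‖x_{k+1} − x⋆‖² ≤ ‖x_k − x⋆‖² − (f_{I(k)}(x_k) − f_{I(k)}⋆)²/‖∇f_{I(k)}(x_k)‖², where I(k) ∈ argmax_i(f_i(x_k) − f_i⋆). Then max_{i∈[m]} (f_i(x̄) − f_i⋆) ≤ 2β‖x₁ − x⋆‖²/K, where x̄ = (1/K)∑_{k=1}^K x_k. -/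
open scoped InnerProductSpace


lemma convex_grad_ineq {E : Type*} [NormedAddCommGroup E] [InnerProductSpace ℝ E] [CompleteSpace E]
    {f : E → ℝ} {g : E} {x : E}
    (hconv : ConvexOn ℝ Set.univ f) (hgrad : HasGradientAt f g x)
    (y : E) : f x + ⟪g, y - x⟫_ℝ ≤ f y := by
  set v := y - x with hv
  have hc : HasDerivAt (fun t : ℝ => x + t • v) v 0 := by
    simpa using ((hasDerivAt_id (0:ℝ)).smul_const v).const_add x
  have hφ : HasDerivAt (fun t : ℝ => f (x + t • v)) ⟪g, v⟫_ℝ 0 := by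
    have := (show HasFDerivAt f ((InnerProductSpace.toDual ℝ E) g) ((fun t : ℝ => x + t • v) 0) by simpa using hgrad.hasFDerivAt).comp_hasDerivAt 0 hc
    simp at this
    exact this
  have hslope : ∀ᶠ t in nhdsWithin (0:ℝ) (Set.Ioi 0),
      slope (fun t : ℝ => f (x + t • v)) 0 t ≤ f y - f x := by
    filter_upwards [Ioc_mem_nhdsGT_of_mem (Set.left_mem_Ico.2 one_pos)] with t ht
    have h1 : f (x + t • v) ≤ (1 - t) * f x + t * f y := by
      have h2 := hconv.2 (Set.mem_univ x) (Set.mem_univ y)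
        (by linarith [ht.2] : (0:ℝ) ≤ 1 - t) (le_of_lt ht.1) (by ring)
      have hxy : (1 - t) • x + t • y = x + t • v := by rw [hv]; module
      simpa [hxy, smul_eq_mul] using h2
    rw [slope_def_field]
    simp only [sub_zero, smul_zero, zero_smul, add_zero]
    rw [div_le_iff₀ ht.1]
    nlinarith [ht.1]
  have htend : Filter.Tendsto (slope (fun t : ℝ => f (x + t • v)) 0)
      (nhdsWithin (0:ℝ) (Set.Ioi 0)) (nhds ⟪g, v⟫_ℝ) :=
    (hasDerivAt_iff_tendsto_slope.1 hφ).mono_left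
      (nhdsWithin_mono 0 (fun t ht => Set.mem_compl_singleton_iff.2 (ne_of_gt ht)))
  have := le_of_tendsto htend hslope
  linarith

/-- Smooth case of the trajectory-gap bound: convex `β`-smooth aligned functions,
per-step Polyak-type decrease toward the common minimizer, `I(k)` the argmax gap
index; then the average iterate satisfies `maxᵢ (fᵢ(x̄) − fᵢ⋆) ≤ 2β‖x₁ − x⋆‖²/K`. -/
theorem smooth_trajectory_gap_bound {n m K : ℕ} (hm : 0 < m) (hK : 1 ≤ K)
    (β : ℝ) (hβ : 0 < β)
    (f : Fin m → EuclideanSpace ℝ (Fin n) → ℝ)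
    (f' : Fin m → EuclideanSpace ℝ (Fin n) → EuclideanSpace ℝ (Fin n))
    (hgrad : ∀ i x, HasGradientAt (f i) (f' i x) x)
    (hconv : ∀ i, ConvexOn ℝ Set.univ (f i))
    (hsmooth : ∀ i x y, f i y ≤ f i x + ⟪f' i x, y - x⟫_ℝ + β / 2 * ‖x - y‖ ^ 2)
    (xstar : EuclideanSpace ℝ (Fin n)) (haligned : ∀ i x, f i xstar ≤ f i x)
    (x : ℕ → EuclideanSpace ℝ (Fin n)) (I : ℕ → Fin m)
    (hI : ∀ k ∈ Finset.Icc 1 K, ∀ i,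
      f i (x k) - f i xstar ≤ f (I k) (x k) - f (I k) xstar)
    (hstep : ∀ k ∈ Finset.Icc 1 K,
      ‖x (k + 1) - xstar‖ ^ 2 ≤ ‖x k - xstar‖ ^ 2 -
        (f (I k) (x k) - f (I k) xstar) ^ 2 / ‖f' (I k) (x k)‖ ^ 2) :
    ∀ i, f i ((1 / (K : ℝ)) • ∑ k ∈ Finset.Icc 1 K, x k) - f i xstar
      ≤ 2 * β * ‖x 1 - xstar‖ ^ 2 / K := by
  have hβ' : β ≠ 0 := ne_of_gt hβ
  have hK0 : (0:ℝ) < (K:ℝ) := by exact_mod_cast hK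
  set g : ℕ → ℝ := fun k => f (I k) (x k) - f (I k) xstar with hgdef
  have hg0 : ∀ k, 0 ≤ g k := fun k => sub_nonneg.2 (haligned _ _)
  -- key smoothness consequence
  have hkey : ∀ j x0, ‖f' j x0‖ ^ 2 ≤ 2 * β * (f j x0 - f j xstar) := by
    intro j x0
    have h := hsmooth j x0 (x0 - β⁻¹ • f' j x0)
    have h2 : ⟪f' j x0, (x0 - β⁻¹ • f' j x0) - x0⟫_ℝ = -(β⁻¹ * ‖f' j x0‖ ^ 2) := by
      have : (x0 - β⁻¹ • f' j x0) - x0 = -(β⁻¹ • f' j x0) := by abel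
      rw [this, inner_neg_right, real_inner_smul_right, real_inner_self_eq_norm_sq]
    have h3 : ‖x0 - (x0 - β⁻¹ • f' j x0)‖ ^ 2 = β⁻¹ ^ 2 * ‖f' j x0‖ ^ 2 := by
      have : x0 - (x0 - β⁻¹ • f' j x0) = β⁻¹ • f' j x0 := by abel
      rw [this, norm_smul]
      simp [abs_of_pos (inv_pos.2 hβ), mul_pow]
    have h4 := haligned j (x0 - β⁻¹ • f' j x0)
    rw [h2, h3] at h
    have heq : f j x0 + -(β⁻¹ * ‖f' j x0‖ ^ 2) + β / 2 * (β⁻¹ ^ 2 * ‖f' j x0‖ ^ 2)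
        = f j x0 - ‖f' j x0‖ ^ 2 / (2 * β) := by field_simp; ring
    rw [heq] at h
    have h8 : ‖f' j x0‖ ^ 2 / (2 * β) ≤ f j x0 - f j xstar := by linarith [h4.trans h]
    calc ‖f' j x0‖ ^ 2 = ‖f' j x0‖ ^ 2 / (2 * β) * (2 * β) := by field_simp
      _ ≤ (f j x0 - f j xstar) * (2 * β) := mul_le_mul_of_nonneg_right h8 (by positivity)
      _ = 2 * β * (f j x0 - f j xstar) := by ring
  -- per-step decrease by g k / (2β)
  have hstep2 : ∀ k ∈ Finset.Icc 1 K,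
      ‖x (k + 1) - xstar‖ ^ 2 ≤ ‖x k - xstar‖ ^ 2 - g k / (2 * β) := by
    intro k hk
    have hs := hstep k hk
    have hfrac : g k / (2 * β) ≤ g k ^ 2 / ‖f' (I k) (x k)‖ ^ 2 := by
      rcases eq_or_lt_of_le (hg0 k) with h0 | hpos
      · simp [← h0]
      · have hN : ‖f' (I k) (x k)‖ ^ 2 ≤ 2 * β * g k := hkey (I k) (x k)
        have hNE : (0:ℝ) < ‖f' (I k) (x k)‖ ^ 2 := by
          rcases eq_or_lt_of_le (sq_nonneg ‖f' (I k) (x k)‖) with hz | hz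
          · exfalso
            have hz' : f' (I k) (x k) = 0 := by
              have := (pow_eq_zero_iff (n := 2) (by norm_num)).1 hz.symm
              exact norm_eq_zero.1 this
            have := convex_grad_ineq (hconv (I k)) (hgrad (I k) (x k)) xstar
            rw [hz'] at this
            simp only [inner_zero_left, add_zero] at this
            have : g k ≤ 0 := sub_nonpos.2 this
            linarith
          · exact hz
        have h1 : g k / (2 * β) = g k ^ 2 / (2 * β * g k) := by
          field_simp
        rw [h1]
        exact div_le_div_of_nonneg_left (sq_nonneg _) hNE hN
    linarith
  -- telescoping sum
  set D : ℕ → ℝ := fun k => ‖x k - xstar‖ ^ 2 with hDdef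
  have htel : ∑ k ∈ Finset.Icc 1 K, (D k - D (k + 1)) = D 1 - D (K + 1) := by
    rw [show Finset.Icc 1 K = Finset.Ico 1 (K + 1) by rw [Finset.Ico_add_one_right_eq_Icc],
      Finset.sum_Ico_eq_sum_range]
    have h := Finset.sum_range_sub' (fun i => D (1 + i)) K
    rw [Nat.add_comm 1 K] at h
    exact h
  have hsum : (∑ k ∈ Finset.Icc 1 K, g k) ≤ 2 * β * ‖x 1 - xstar‖ ^ 2 := by
    have h1 : ∑ k ∈ Finset.Icc 1 K, g k / (2 * β) ≤ ∑ k ∈ Finset.Icc 1 K, (D k - D (k + 1)) :=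
      Finset.sum_le_sum fun k hk => by have := hstep2 k hk; simp only [hDdef]; linarith
    rw [htel] at h1
    have h2 : ∑ k ∈ Finset.Icc 1 K, g k / (2 * β) = (∑ k ∈ Finset.Icc 1 K, g k) / (2 * β) :=
      (Finset.sum_div _ _ _).symm
    rw [h2] at h1
    have hD1 : (0:ℝ) ≤ D (K + 1) := sq_nonneg _
    have : (∑ k ∈ Finset.Icc 1 K, g k) / (2 * β) ≤ D 1 := by linarith
    calc (∑ k ∈ Finset.Icc 1 K, g k)
        = ((∑ k ∈ Finset.Icc 1 K, g k) / (2 * β)) * (2 * β) := by field_simp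
      _ ≤ D 1 * (2 * β) := by
          apply mul_le_mul_of_nonneg_right this (by positivity)
      _ = 2 * β * ‖x 1 - xstar‖ ^ 2 := by rw [hDdef]; ring
  intro i
  -- Jensen
  have hcard : (Finset.Icc 1 K).card = K := by simp
  have hw : ∑ _k ∈ Finset.Icc 1 K, (1 / (K:ℝ)) = 1 := by
    rw [Finset.sum_const, hcard, nsmul_eq_mul]
    field_simp
  have hjensen := (hconv i).map_sum_le (w := fun _ => 1 / (K:ℝ)) (p := x)
    (fun _ _ => by positivity) hw (fun _ _ => Set.mem_univ _)
  have hpt : (1 / (K:ℝ)) • ∑ k ∈ Finset.Icc 1 K, x k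
      = ∑ k ∈ Finset.Icc 1 K, (1 / (K:ℝ)) • x k := Finset.smul_sum
  rw [← hpt] at hjensen
  have h5 : ∑ k ∈ Finset.Icc 1 K, 1 / (K:ℝ) * f i (x k)
      = (1 / (K:ℝ)) * ∑ k ∈ Finset.Icc 1 K, f i (x k) := by
    rw [Finset.mul_sum]
  have h6 : ∑ k ∈ Finset.Icc 1 K, (f i (x k) - f i xstar) ≤ ∑ k ∈ Finset.Icc 1 K, g k :=
    Finset.sum_le_sum fun k hk => hI k hk i
  have h7 : ∑ k ∈ Finset.Icc 1 K, (f i (x k) - f i xstar)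
      = (∑ k ∈ Finset.Icc 1 K, f i (x k)) - K * f i xstar := by
    rw [Finset.sum_sub_distrib, Finset.sum_const, hcard, nsmul_eq_mul]
  have hfin : (∑ k ∈ Finset.Icc 1 K, f i (x k)) ≤ 2 * β * ‖x 1 - xstar‖ ^ 2 + K * f i xstar := by
    linarith
  have hj2 : f i ((1 / (K:ℝ)) • ∑ k ∈ Finset.Icc 1 K, x k)
      ≤ 1 / (K:ℝ) * ∑ k ∈ Finset.Icc 1 K, f i (x k) := by
    rw [← h5]
    simpa [smul_eq_mul] using hjensen
  calc f i ((1 / (K:ℝ)) • ∑ k ∈ Finset.Icc 1 K, x k) - f i xstar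
      ≤ 1 / (K:ℝ) * ∑ k ∈ Finset.Icc 1 K, f i (x k) - f i xstar := by linarith
    _ ≤ 1 / (K:ℝ) * (2 * β * ‖x 1 - xstar‖ ^ 2 + K * f i xstar) - f i xstar := by
        have := mul_le_mul_of_nonneg_left hfin (by positivity : (0:ℝ) ≤ 1 / (K:ℝ))
        linarith
    _ = 2 * β * ‖x 1 - xstar‖ ^ 2 / K := by field_simp; ring
end

section
/- Let f_w(x) = ∑_i w_i f_i(x) with convex differentiable f_i and w ∈ ℝ_+^m, and let x⋆ be any point. For the update x_{k+1} = x_k − ∇f_{w_k}(x_k) with w_k ∈ argmax_{w ∈ ℝ_+^m} [2(f_w(x_k) − f_w(x⋆)) − ‖∇f_w(x_k)‖²], one has ‖x_{k+1} − x⋆‖² ≤ ‖x_k − x⋆‖² − max_{i∈[m]} (f_i(x_k) − f_i(x⋆))²/‖∇f_i(x_k)‖², provided the relevant gradients are nonzero and x⋆ minimizes all f_i (so f_i(x⋆) = f_i⋆). -/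
open InnerProductSpace

/-- First-order condition for convex differentiable functions. -/
lemma convex_first_order {E : Type*} [NormedAddCommGroup E] [InnerProductSpace ℝ E] [CompleteSpace E]
    {f : E → ℝ} {g x : E} (hc : ConvexOn ℝ Set.univ f) (hg : HasGradientAt f g x)
    (y : E) : f x + inner ℝ g (y - x) ≤ f y := by
  -- consider φ t = f (x + t • (y - x))
  set φ : ℝ → ℝ := fun t => f (x + t • (y - x)) with hφ
  have hφconv : ConvexOn ℝ Set.univ φ := by
    have := hc.comp_affineMap (AffineMap.lineMap x y)
    have heq : φ = f ∘ (AffineMap.lineMap x y) := by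
      funext t
      simp [φ, AffineMap.lineMap_apply, add_comm]
    rw [heq]
    simpa using this
  have hd : HasDerivAt φ (inner ℝ g (y - x)) 0 := by
    have hc' : HasDerivAt (fun t : ℝ => x + t • (y - x)) (y - x) 0 := by
      simpa using ((hasDerivAt_id (0:ℝ)).smul_const (y - x)).const_add x
    have hf : HasFDerivAt f (toDual ℝ E g) (x + (0:ℝ) • (y - x)) := by
      simpa using hg.hasFDerivAt
    have := hf.comp_hasDerivAt 0 hc'
    simp only [toDual_apply_apply] at this; exact this
  have := hφconv.le_slope_of_hasDerivAt (Set.mem_univ 0) (Set.mem_univ 1) one_pos hd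
  have hslope : slope φ 0 1 = f y - f x := by
    simp [slope, φ]
  rw [hslope] at this
  linarith

/-- PAMOO step lemma: with `f_w = ∑ᵢ wᵢ fᵢ`, `∇f_w = ∑ᵢ wᵢ ∇fᵢ`, if `w_k` maximizes
`2(f_w(x_k) − f_w(x⋆)) − ‖∇f_w(x_k)‖²` over `w ∈ ℝ₊^m`, and `x⋆` minimizes every
`fᵢ` with all `∇fᵢ(x_k) ≠ 0`, then the update `x_{k+1} = x_k − ∇f_{w_k}(x_k)`
satisfies `‖x_{k+1} − x⋆‖² ≤ ‖x_k − x⋆‖² − (fᵢ(x_k) − fᵢ⋆)²/‖∇fᵢ(x_k)‖²` for every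
`i` (hence with the max over `i`). -/
theorem pamoo_step_decrease {n m : ℕ} (hm : 0 < m)
    (f : Fin m → EuclideanSpace ℝ (Fin n) → ℝ)
    (f' : Fin m → EuclideanSpace ℝ (Fin n) → EuclideanSpace ℝ (Fin n))
    (hgrad : ∀ i x, HasGradientAt (f i) (f' i x) x)
    (hconv : ∀ i, ConvexOn ℝ Set.univ (f i))
    (xstar : EuclideanSpace ℝ (Fin n)) (hmin : ∀ i x, f i xstar ≤ f i x)
    (xk : EuclideanSpace ℝ (Fin n)) (hne : ∀ i, f' i xk ≠ 0)
    (wk : Fin m → ℝ) (hwpos : ∀ i, 0 ≤ wk i)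
    (hwmax : ∀ w : Fin m → ℝ, (∀ i, 0 ≤ w i) →
      2 * (∑ i, w i * f i xk - ∑ i, w i * f i xstar) - ‖∑ i, w i • f' i xk‖ ^ 2
        ≤ 2 * (∑ i, wk i * f i xk - ∑ i, wk i * f i xstar)
            - ‖∑ i, wk i • f' i xk‖ ^ 2) :
    ∀ i, ‖(xk - ∑ j, wk j • f' j xk) - xstar‖ ^ 2
      ≤ ‖xk - xstar‖ ^ 2 - (f i xk - f i xstar) ^ 2 / ‖f' i xk‖ ^ 2 := by
  intro i
  set g : EuclideanSpace ℝ (Fin n) := ∑ j, wk j • f' j xk with hg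
  set D : ℝ := f i xk - f i xstar with hD
  have hDpos : 0 ≤ D := sub_nonneg.2 (hmin i xk)
  have hG : (0:ℝ) < ‖f' i xk‖ ^ 2 := pow_pos (norm_pos_iff.2 (hne i)) 2
  -- candidate weight vector
  set c : ℝ := D / ‖f' i xk‖ ^ 2 with hc
  have hcnn : 0 ≤ c := div_nonneg hDpos hG.le
  set w : Fin m → ℝ := fun j => if j = i then c else 0 with hw
  have hwn : ∀ j, 0 ≤ w j := by
    intro j; by_cases h : j = i <;> simp [hw, h, hcnn]
  have key := hwmax w hwn
  have h1 : ∑ j, w j * f j xk = c * f i xk := by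
    simp [hw, Finset.sum_ite_eq']
  have h2 : ∑ j, w j * f j xstar = c * f i xstar := by
    simp [hw, Finset.sum_ite_eq']
  have h3 : (∑ j, w j • f' j xk) = c • f' i xk := by
    rw [hw]
    rw [Finset.sum_eq_single i]
    · simp
    · intro b _ hb; simp [hb]
    · intro h; exact absurd (Finset.mem_univ i) h
  rw [h1, h2, h3] at key
  have hnorm : ‖c • f' i xk‖ ^ 2 = c ^ 2 * ‖f' i xk‖ ^ 2 := by
    rw [norm_smul]; ring_nf; simp [abs_of_nonneg hcnn]; ring
  rw [hnorm] at key
  have hlhs : 2 * (c * f i xk - c * f i xstar) - c ^ 2 * ‖f' i xk‖ ^ 2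
      = D ^ 2 / ‖f' i xk‖ ^ 2 := by
    rw [hc]; field_simp; ring
  rw [hlhs] at key
  -- convexity bound: sum of weighted gaps ≤ ⟪g, xk - xstar⟫
  have hconvb : ∑ j, wk j * f j xk - ∑ j, wk j * f j xstar
      ≤ inner ℝ g (xk - xstar) := by
    have hsum : (inner ℝ g (xk - xstar) : ℝ)
        = ∑ j, wk j * inner ℝ (f' j xk) (xk - xstar) := by
      rw [hg, sum_inner]
      congr 1; funext j
      rw [real_inner_smul_left]
    rw [hsum, ← Finset.sum_sub_distrib]
    apply Finset.sum_le_sum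
    intro j _
    have := convex_first_order (hconv j) (hgrad j xk) xstar
    have h' : f j xk - f j xstar ≤ inner ℝ (f' j xk) (xk - xstar) := by
      have : f j xk + inner ℝ (f' j xk) (xstar - xk) ≤ f j xstar := this
      have hneg : (inner ℝ (f' j xk) (xstar - xk) : ℝ)
          = - inner ℝ (f' j xk) (xk - xstar) := by
        rw [← inner_neg_right]; congr 1; abel
      linarith [hneg ▸ this]
    calc wk j * f j xk - wk j * f j xstar = wk j * (f j xk - f j xstar) := by ring
      _ ≤ wk j * inner ℝ (f' j xk) (xk - xstar) :=
        mul_le_mul_of_nonneg_left h' (hwpos j)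
  -- norm expansion
  have hexp : ‖(xk - g) - xstar‖ ^ 2
      = ‖xk - xstar‖ ^ 2 - 2 * inner ℝ (xk - xstar) g + ‖g‖ ^ 2 := by
    have : (xk - g) - xstar = (xk - xstar) - g := by abel
    rw [this, norm_sub_sq_real]
  rw [hexp]
  have hsymm : (inner ℝ (xk - xstar) g : ℝ) = inner ℝ g (xk - xstar) :=
    real_inner_comm _ _
  nlinarith [key, hconvb, hsymm]
end

section
/- Suppose f₁,…,f_m are convex and aligned with common minimizer x⋆, and an online learning algorithm generates iterates x₁,…,x_K facing the adaptively chosen sequence f_{I(1)},…,f_{I(K)} where I(k) ∈ argmax_i(f_i(x_k) − f_i⋆). If the algorithm has regret bound ∑_{k=1}^K (f_{I(k)}(x_k) − f_{I(k)}(x)) ≤ R(K) for all comparators x in a set containing x⋆, then the average iterate x̄ satisfies max_{i∈[m]} (f_i(x̄) − f_i⋆) ≤ R(K)/K. -/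
/-- Online-to-AMOO conversion: convex aligned functions with common minimizer
`x⋆`; if the online learner facing the adaptively chosen sequence `f_{I(k)}`
(with `I(k)` the argmax-gap index) has regret at most `R` against every comparator
in a set containing `x⋆`, then the average iterate satisfies
`maxᵢ (fᵢ(x̄) − fᵢ⋆) ≤ R/K`. -/
theorem online_to_amoo {n m K : ℕ} (hm : 0 < m) (hK : 1 ≤ K)
    (f : Fin m → EuclideanSpace ℝ (Fin n) → ℝ)
    (hconv : ∀ i, ConvexOn ℝ Set.univ (f i))
    (xstar : EuclideanSpace ℝ (Fin n)) (haligned : ∀ i x, f i xstar ≤ f i x)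
    (x : ℕ → EuclideanSpace ℝ (Fin n)) (I : ℕ → Fin m)
    (hI : ∀ k ∈ Finset.Icc 1 K, ∀ i,
      f i (x k) - f i xstar ≤ f (I k) (x k) - f (I k) xstar)
    (D : Set (EuclideanSpace ℝ (Fin n))) (hD : xstar ∈ D) (R : ℝ)
    (hreg : ∀ y ∈ D, ∑ k ∈ Finset.Icc 1 K, (f (I k) (x k) - f (I k) y) ≤ R) :
    ∀ i, f i ((1 / (K : ℝ)) • ∑ k ∈ Finset.Icc 1 K, x k) - f i xstar ≤ R / K := by
  intro i
  have hKpos : (0:ℝ) < K := by exact_mod_cast hK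
  have hcard : (Finset.Icc 1 K).card = K := by simp
  have hsum1 : ∑ k ∈ Finset.Icc 1 K, (1 / (K:ℝ)) = 1 := by
    rw [Finset.sum_const, hcard, nsmul_eq_mul]
    field_simp
  have hjensen : f i ((1 / (K : ℝ)) • ∑ k ∈ Finset.Icc 1 K, x k)
      ≤ ∑ k ∈ Finset.Icc 1 K, (1 / (K:ℝ)) * f i (x k) := by
    rw [Finset.smul_sum]
    exact (hconv i).map_sum_le (fun k _ => by positivity) hsum1 (fun k _ => Set.mem_univ _)
  have h2 : ∑ k ∈ Finset.Icc 1 K, (f i (x k) - f i xstar) ≤ R := by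
    calc ∑ k ∈ Finset.Icc 1 K, (f i (x k) - f i xstar)
        ≤ ∑ k ∈ Finset.Icc 1 K, (f (I k) (x k) - f (I k) xstar) :=
          Finset.sum_le_sum (fun k hk => hI k hk i)
      _ ≤ R := hreg xstar hD
  have : f i ((1 / (K : ℝ)) • ∑ k ∈ Finset.Icc 1 K, x k) - f i xstar
      ≤ (1 / (K:ℝ)) * ∑ k ∈ Finset.Icc 1 K, (f i (x k) - f i xstar) := by
    rw [Finset.mul_sum]
    have : ∑ k ∈ Finset.Icc 1 K, (1/(K:ℝ)) * (f i (x k) - f i xstar)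
        = (∑ k ∈ Finset.Icc 1 K, (1/(K:ℝ)) * f i (x k)) - f i xstar := by
      simp only [mul_sub]
      rw [Finset.sum_sub_distrib, ← Finset.sum_mul, hsum1, one_mul]
    simp only [mul_sub] at this ⊢
    linarith [hjensen]
  calc f i ((1 / (K : ℝ)) • ∑ k ∈ Finset.Icc 1 K, x k) - f i xstar
      ≤ (1 / (K:ℝ)) * ∑ k ∈ Finset.Icc 1 K, (f i (x k) - f i xstar) := this
    _ ≤ (1 / (K:ℝ)) * R := by
        apply mul_le_mul_of_nonneg_left h2; positivity
    _ = R / K := by ring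
end

section
/- Let f₁,…,f_m be convex and β-smooth with common minimizer x⋆. The MG-AMOO algorithm, which at step k picks I(k) ∈ argmax_i(f_i(x_k) − f_i⋆) and sets x_{k+1} = x_k − (1/(2β))∇f_{I(k)}(x_k), guarantees that the average iterate x̄ = (1/K)∑_{k=1}^K x_k satisfies max_{i∈[m]}(f_i(x̄) − f_i⋆) ≤ 2β‖x₁ − x⋆‖²/K. -/
open scoped InnerProductSpace

/-- Gradient inequality for convex functions: `f x + ⟪g, y - x⟫ ≤ f y`. -/
lemma grad_convex_le {n : ℕ} {f : EuclideanSpace ℝ (Fin n) → ℝ}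
    {g x y : EuclideanSpace ℝ (Fin n)}
    (hc : ConvexOn ℝ Set.univ f) (hg : HasGradientAt f g x) :
    f x + ⟪g, y - x⟫_ℝ ≤ f y := by
  set c : ℝ → EuclideanSpace ℝ (Fin n) := fun t => x + t • (y - x) with hc_def
  have hline : HasDerivAt c (y - x) 0 := by
    have h1 : HasDerivAt (fun t : ℝ => t • (y - x)) ((1 : ℝ) • (y - x)) 0 :=
      (hasDerivAt_id (0 : ℝ)).smul_const (y - x)
    simpa [hc_def] using h1.const_add x
  have hc0 : c 0 = x := by simp [hc_def]
  have hc1 : c 1 = y := by simp [hc_def]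
  have hd : HasDerivAt (f ∘ c) (⟪g, y - x⟫_ℝ) 0 := by
    have := (hc0 ▸ hg.hasFDerivAt).comp_hasDerivAt 0 hline
    simpa using this
  have hφ : ConvexOn ℝ Set.univ (f ∘ c) := by
    have haff : ConvexOn ℝ ((AffineMap.lineMap x y : ℝ →ᵃ[ℝ] _) ⁻¹' Set.univ)
        (f ∘ (AffineMap.lineMap x y : ℝ →ᵃ[ℝ] _)) :=
      hc.comp_affineMap _
    have heq : (fun t : ℝ => f (AffineMap.lineMap x y t)) = f ∘ c := by
      funext t
      simp only [Function.comp_apply, hc_def, AffineMap.lineMap_apply, vsub_eq_sub,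
        vadd_eq_add]
      congr 1; abel
    rw [Set.preimage_univ] at haff
    exact heq ▸ haff
  have hs := hφ.le_slope_of_hasDerivAt (Set.mem_univ (0 : ℝ)) (Set.mem_univ (1 : ℝ))
    one_pos hd
  have : slope (f ∘ c) 0 1 = f y - f x := by
    simp [slope_def_field, hc0, hc1, Function.comp]
  linarith [hs.trans_eq this]

/-- MG-AMOO with gradient descent: convex `β`-smooth functions with common
minimizer `x⋆`; at each step `I(k)` is the argmax-gap index and
`x_{k+1} = x_k − (1/(2β))∇f_{I(k)}(x_k)`. Then the average iterate satisfies
`maxᵢ (fᵢ(x̄) − fᵢ⋆) ≤ 2β‖x₁ − x⋆‖²/K`. -/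
theorem mg_amoo_gd_smooth {n m K : ℕ} (hm : 0 < m) (hK : 1 ≤ K)
    (β : ℝ) (hβ : 0 < β)
    (f : Fin m → EuclideanSpace ℝ (Fin n) → ℝ)
    (f' : Fin m → EuclideanSpace ℝ (Fin n) → EuclideanSpace ℝ (Fin n))
    (hgrad : ∀ i x, HasGradientAt (f i) (f' i x) x)
    (hconv : ∀ i, ConvexOn ℝ Set.univ (f i))
    (hsmooth : ∀ i x y, f i y ≤ f i x + ⟪f' i x, y - x⟫_ℝ + β / 2 * ‖x - y‖ ^ 2)
    (xstar : EuclideanSpace ℝ (Fin n)) (haligned : ∀ i x, f i xstar ≤ f i x)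
    (x : ℕ → EuclideanSpace ℝ (Fin n)) (I : ℕ → Fin m)
    (hI : ∀ k ∈ Finset.Icc 1 K, ∀ i,
      f i (x k) - f i xstar ≤ f (I k) (x k) - f (I k) xstar)
    (hrec : ∀ k ∈ Finset.Icc 1 K,
      x (k + 1) = x k - (1 / (2 * β)) • f' (I k) (x k)) :
    ∀ i, f i ((1 / (K : ℝ)) • ∑ k ∈ Finset.Icc 1 K, x k) - f i xstar
      ≤ 2 * β * ‖x 1 - xstar‖ ^ 2 / K := by
  intro i
  set D : ℕ → ℝ := fun k => ‖x k - xstar‖ ^ 2 with hD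
  set gap : ℕ → ℝ := fun k => f (I k) (x k) - f (I k) xstar with hgap
  clear_value D gap
  -- per-step inequality
  have hstep : ∀ k ∈ Finset.Icc 1 K, gap k ≤ 2 * β * (D k - D (k + 1)) := by
    intro k hk
    set g : EuclideanSpace ℝ (Fin n) := f' (I k) (x k) with hg
    clear_value g
    -- convexity lower bound
    have hcv : f (I k) (x k) + ⟪g, xstar - x k⟫_ℝ ≤ f (I k) xstar := by
      rw [hg]; exact grad_convex_le (hconv (I k)) (hgrad (I k) (x k))
    have hinner : gap k ≤ ⟪g, x k - xstar⟫_ℝ := by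
      have : ⟪g, xstar - x k⟫_ℝ = -⟪g, x k - xstar⟫_ℝ := by
        rw [← inner_neg_right]; congr 1; abel
      rw [this] at hcv
      simp only [hgap]; linarith
    -- smoothness bound on gradient norm
    have hgn : ‖g‖ ^ 2 ≤ 2 * β * gap k := by
      have hs := hsmooth (I k) (x k) (x k - (1 / β) • g)
      rw [← hg] at hs
      have h1 : ⟪g, (x k - (1 / β) • g) - x k⟫_ℝ = -(1 / β) * ‖g‖ ^ 2 := by
        have : (x k - (1 / β) • g) - x k = (-(1 / β)) • g := by
          rw [neg_smul]; abel
        rw [this, real_inner_smul_right, real_inner_self_eq_norm_sq]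
      have h2 : ‖x k - (x k - (1 / β) • g)‖ ^ 2 = (1 / β) ^ 2 * ‖g‖ ^ 2 := by
        have : x k - (x k - (1 / β) • g) = (1 / β) • g := by abel
        rw [this, norm_smul]
        simp [mul_pow, abs_of_pos (one_div_pos.mpr hβ)]
      rw [h1, h2] at hs
      have hal := haligned (I k) (x k - (1 / β) • g)
      have hβ' : β ≠ 0 := ne_of_gt hβ
      have e1 : β / 2 * ((1 / β) ^ 2 * ‖g‖ ^ 2) = ‖g‖ ^ 2 / (2 * β) := by
        field_simp
      rw [e1] at hs
      have key : ‖g‖ ^ 2 / (2 * β) ≤ f (I k) (x k) - f (I k) xstar := by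
        have e2 : -(1 / β) * ‖g‖ ^ 2 = -(2 * (‖g‖ ^ 2 / (2 * β))) := by
          field_simp
        rw [e2] at hs
        linarith
      have key' := (div_le_iff₀ (by positivity : (0:ℝ) < 2 * β)).mp key
      simp only [hgap]
      linarith [key']
    -- expansion of the recursion
    have hx' := hrec k hk
    have hexp : D (k + 1) = D k - (1 / β) * ⟪g, x k - xstar⟫_ℝ
        + (1 / (2 * β)) ^ 2 * ‖g‖ ^ 2 := by
      have h3 : x (k + 1) - xstar = (x k - xstar) - (1 / (2 * β)) • g := by
        rw [hx', ← hg]; abel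
      simp only [hD]
      rw [h3, norm_sub_sq_real, real_inner_smul_right, norm_smul, Real.norm_eq_abs,
        abs_of_pos (by positivity : (0:ℝ) < 1 / (2 * β)), mul_pow,
        real_inner_comm (x k - xstar) g]
      ring
    have hexp' : 2 * β * (D k - D (k + 1))
        = 2 * ⟪g, x k - xstar⟫_ℝ - (1 / (2 * β)) * ‖g‖ ^ 2 := by
      rw [hexp]; field_simp; ring
    have h6 : (1 / (2 * β)) * ‖g‖ ^ 2 ≤ gap k := by
      have h7 := mul_le_mul_of_nonneg_left hgn
        (by positivity : (0:ℝ) ≤ 1 / (2 * β))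
      have h8 : (1 / (2 * β)) * (2 * β * gap k) = gap k := by field_simp
      linarith [h8 ▸ h7]
    rw [hexp']
    nlinarith [hinner, h6]
  -- telescoping sum
  have htel : ∀ N : ℕ, ∑ k ∈ Finset.Icc 1 N, (D k - D (k + 1)) = D 1 - D (N + 1) := by
    intro N
    induction N with
    | zero => simp
    | succ N ih => rw [Finset.sum_Icc_succ_top (by omega), ih]; ring
  have hDnonneg : 0 ≤ D (K + 1) := by simp only [hD]; positivity
  have hsumgap : ∑ k ∈ Finset.Icc 1 K, gap k ≤ 2 * β * D 1 := by
    calc ∑ k ∈ Finset.Icc 1 K, gap k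
        ≤ ∑ k ∈ Finset.Icc 1 K, 2 * β * (D k - D (k + 1)) :=
          Finset.sum_le_sum hstep
      _ = 2 * β * (D 1 - D (K + 1)) := by rw [← Finset.mul_sum, htel K]
      _ ≤ 2 * β * D 1 := by nlinarith
  -- Jensen
  have hKpos : (0 : ℝ) < K := by exact_mod_cast hK
  have hcard : (Finset.Icc 1 K).card = K := by simp
  have hwsum : ∑ _k ∈ Finset.Icc 1 K, (1 / (K : ℝ)) = 1 := by
    rw [Finset.sum_const, hcard, nsmul_eq_mul]
    field_simp
  have hjensen : f i ((1 / (K : ℝ)) • ∑ k ∈ Finset.Icc 1 K, x k)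
      ≤ ∑ k ∈ Finset.Icc 1 K, (1 / (K : ℝ)) * f i (x k) := by
    have := (hconv i).map_sum_le (t := Finset.Icc 1 K)
      (w := fun _ => 1 / (K : ℝ)) (p := fun k => x k)
      (fun _ _ => by positivity) hwsum (fun _ _ => Set.mem_univ _)
    rwa [← Finset.smul_sum] at this
  have h5 : ∑ k ∈ Finset.Icc 1 K, (1 / (K : ℝ)) * (f i (x k) - f i xstar)
      = (∑ k ∈ Finset.Icc 1 K, (1 / (K : ℝ)) * f i (x k)) - f i xstar := by
    simp_rw [mul_sub]
    rw [Finset.sum_sub_distrib, Finset.sum_const, hcard, nsmul_eq_mul]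
    field_simp
  have hbound : ∑ k ∈ Finset.Icc 1 K, (1 / (K : ℝ)) * (f i (x k) - f i xstar)
      ≤ 2 * β * ‖x 1 - xstar‖ ^ 2 / K := by
    calc ∑ k ∈ Finset.Icc 1 K, (1 / (K : ℝ)) * (f i (x k) - f i xstar)
        ≤ ∑ k ∈ Finset.Icc 1 K, (1 / (K : ℝ)) * gap k :=
          Finset.sum_le_sum fun k hk =>
            mul_le_mul_of_nonneg_left (by simp only [hgap]; exact hI k hk i) (by positivity)
      _ = (1 / (K : ℝ)) * ∑ k ∈ Finset.Icc 1 K, gap k := by rw [Finset.mul_sum]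
      _ ≤ (1 / (K : ℝ)) * (2 * β * D 1) :=
          mul_le_mul_of_nonneg_left hsumgap (by positivity)
      _ = 2 * β * ‖x 1 - xstar‖ ^ 2 / K := by simp only [hD]; field_simp
  linarith [hjensen, h5 ▸ hbound]
end

section
/- Let f₁,…,f_m be convex, G-Lipschitz, with infima f_i⋆, and let x_ε satisfy f_i(x_ε) − f_i⋆ ≤ ε for all i. Suppose iterates satisfy, for each k, ‖x_{k+1} − x_ε‖² ≤ ‖x_k − x_ε‖² − (f_{I(k)}(x_k) − f_{I(k)}⋆ − ε)²/‖∇f_{I(k)}(x_k)‖² with f_{I(k)}(x_k) − f_{I(k)}⋆ − ε ≥ 0 and I(k) ∈ argmax_i(f_i(x_k) − f_i⋆). Then the average iterate x̄ satisfies max_{i∈[m]}(f_i(x̄) − f_i⋆) ≤ G‖x₁ − x_ε‖/√K + ε. -/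
open Finset Filter Topology

theorem convex_grad_ineq_s15 {n : ℕ} (f : EuclideanSpace ℝ (Fin n) → ℝ)
    (g x : EuclideanSpace ℝ (Fin n)) (hconv : ConvexOn ℝ Set.univ f)
    (hg : HasGradientAt f g x) (y : EuclideanSpace ℝ (Fin n)) :
    f x + inner ℝ g (y - x) ≤ f y := by
  set φ : ℝ → ℝ := fun t => f (x + t • (y - x)) with hφ
  have hc : ∀ t : ℝ, HasDerivAt (fun s : ℝ => x + s • (y - x)) (y - x) t := by
    intro t
    simpa using ((hasDerivAt_id t).smul_const (y - x)).const_add x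
  have hφ' : HasDerivAt φ (inner ℝ g (y - x)) 0 := by
    have h0 : x + (0:ℝ) • (y - x) = x := by simp
    have hg' : HasFDerivAt f ((InnerProductSpace.toDual ℝ _) g) (x + (0:ℝ) • (y - x)) := by
      rw [h0]; exact hg.hasFDerivAt
    have := hg'.comp_hasDerivAt 0 (hc 0)
    exact this
  have hslope : Tendsto (slope φ 0) (𝓝[>] 0) (𝓝 ((inner ℝ g (y - x) : ℝ))) :=
    (hasDerivAt_iff_tendsto_slope.mp hφ').mono_left
      (nhdsWithin_mono 0 (fun t ht => ne_of_gt ht))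
  have hle : ∀ t ∈ Set.Ioc (0:ℝ) 1, slope φ 0 t ≤ f y - f x := by
    intro t ht
    have h1 : φ t ≤ (1 - t) * f x + t * f y := by
      have := hconv.2 (Set.mem_univ x) (Set.mem_univ y)
        (by linarith [ht.2] : (0:ℝ) ≤ 1 - t) (le_of_lt ht.1) (by ring)
      have hxy : (1 - t) • x + t • y = x + t • (y - x) := by
        rw [smul_sub, sub_smul, one_smul]; abel
      rw [hxy] at this
      simpa [smul_eq_mul] using this
    have h0 : φ 0 = f x := by simp [hφ]
    rw [slope_def_field, sub_zero, div_le_iff₀ ht.1]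
    nlinarith [ht.1]
  have : (inner ℝ g (y - x) : ℝ) ≤ f y - f x := by
    refine le_of_tendsto hslope ?_
    filter_upwards [Ioc_mem_nhdsGT_of_mem (Set.left_mem_Ico.mpr one_pos)] with t ht
    exact hle t ht
  linarith

/-- ε-approximate Lipschitz trajectory bound: convex `G`-Lipschitz functions with
lower bounds `fᵢ⋆`, a point `x_ε` that is ε-optimal for all of them, per-step
decrease toward `x_ε` with nonnegative shifted gaps, and `I(k)` the argmax-gap
index; then the average iterate satisfies
`maxᵢ (fᵢ(x̄) − fᵢ⋆) ≤ G‖x₁ − x_ε‖/√K + ε`. -/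
theorem approx_lipschitz_trajectory_gap_bound {n m K : ℕ} (hm : 0 < m) (hK : 1 ≤ K)
    (G ε : ℝ) (hε : 0 < ε)
    (f : Fin m → EuclideanSpace ℝ (Fin n) → ℝ)
    (f' : Fin m → EuclideanSpace ℝ (Fin n) → EuclideanSpace ℝ (Fin n))
    (hgrad : ∀ i x, HasGradientAt (f i) (f' i x) x)
    (hconv : ∀ i, ConvexOn ℝ Set.univ (f i))
    (hLip : ∀ i x, ‖f' i x‖ ≤ G)
    (fs : Fin m → ℝ) (hfs : ∀ i x, fs i ≤ f i x)
    (xε : EuclideanSpace ℝ (Fin n)) (hxε : ∀ i, f i xε - fs i ≤ ε)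
    (x : ℕ → EuclideanSpace ℝ (Fin n)) (I : ℕ → Fin m)
    (hI : ∀ k ∈ Finset.Icc 1 K, ∀ i,
      f i (x k) - fs i ≤ f (I k) (x k) - fs (I k))
    (hgap : ∀ k ∈ Finset.Icc 1 K, 0 ≤ f (I k) (x k) - fs (I k) - ε)
    (hstep : ∀ k ∈ Finset.Icc 1 K,
      ‖x (k + 1) - xε‖ ^ 2 ≤ ‖x k - xε‖ ^ 2 -
        (f (I k) (x k) - fs (I k) - ε) ^ 2 / ‖f' (I k) (x k)‖ ^ 2) :
    ∀ i, f i ((1 / (K : ℝ)) • ∑ k ∈ Finset.Icc 1 K, x k) - fs i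
      ≤ G * ‖x 1 - xε‖ / Real.sqrt K + ε := by
  set S := Finset.Icc 1 K with hS
  set a : ℕ → ℝ := fun k => f (I k) (x k) - fs (I k) - ε with ha
  set h : ℕ → ℝ := fun k => ‖x k - xε‖ ^ 2 with hh
  have hG : 0 ≤ G := le_trans (norm_nonneg _) (hLip ⟨0, hm⟩ 0)
  -- Step A: per-step bound
  have stepA : ∀ k ∈ S, a k ^ 2 ≤ G ^ 2 * (h k - h (k + 1)) := by
    intro k hk
    have hs := hstep k hk
    by_cases hN : ‖f' (I k) (x k)‖ = 0
    · have hf0 : f' (I k) (x k) = 0 := norm_eq_zero.mp hN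
      have := convex_grad_ineq_s15 (f (I k)) (f' (I k) (x k)) (x k) (hconv (I k))
        (hgrad (I k) (x k)) xε
      rw [hf0] at this
      simp only [inner_zero_left, add_zero] at this
      have hak0 : a k = 0 := by
        have h2 := hxε (I k)
        have h3 := hgap k hk
        have : a k ≤ 0 := by show f (I k) (x k) - fs (I k) - ε ≤ 0; linarith
        have h4 : 0 ≤ a k := h3
        linarith
      rw [hak0]
      have : h (k + 1) ≤ h k := by
        simp only [hN] at hs; simp only [hh]
        simpa using hs
      nlinarith
    · have hNpos : 0 < ‖f' (I k) (x k)‖ := lt_of_le_of_ne (norm_nonneg _) (Ne.symm hN)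
      have hdiff : a k ^ 2 / ‖f' (I k) (x k)‖ ^ 2 ≤ h k - h (k + 1) := by
        simp only [hh]; linarith
      have hdnn : 0 ≤ h k - h (k + 1) :=
        le_trans (div_nonneg (sq_nonneg _) (sq_nonneg _)) hdiff
      have h1 : a k ^ 2 ≤ ‖f' (I k) (x k)‖ ^ 2 * (h k - h (k + 1)) := by
        rw [div_le_iff₀ (by positivity)] at hdiff; linarith [hdiff]
      have h2 : ‖f' (I k) (x k)‖ ^ 2 ≤ G ^ 2 := by
        have := hLip (I k) (x k); nlinarith [norm_nonneg (f' (I k) (x k))]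
      nlinarith
  -- Step B: telescoping
  have stepB : ∑ k ∈ S, (h k - h (k + 1)) = h 1 - h (K + 1) := by
    rw [hS, ← Finset.Ico_add_one_right_eq_Icc, Finset.sum_Ico_eq_sum_range]
    simp only [Nat.add_sub_cancel]
    have := Finset.sum_range_sub' (f := fun j => h (1 + j)) K
    simpa [Nat.add_comm, Nat.add_assoc, Nat.add_left_comm] using this
  -- Step C
  have stepC : ∑ k ∈ S, a k ^ 2 ≤ G ^ 2 * ‖x 1 - xε‖ ^ 2 := by
    calc ∑ k ∈ S, a k ^ 2 ≤ ∑ k ∈ S, G ^ 2 * (h k - h (k + 1)) :=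
          Finset.sum_le_sum stepA
      _ = G ^ 2 * (h 1 - h (K + 1)) := by rw [← Finset.mul_sum, stepB]
      _ ≤ G ^ 2 * ‖x 1 - xε‖ ^ 2 := by
          have : 0 ≤ h (K + 1) := sq_nonneg _
          simp only [hh]; nlinarith
  -- Step D : Cauchy-Schwarz and sum bound
  have hcard : (S.card : ℝ) = K := by rw [hS, Nat.card_Icc]; simp
  have hKpos : (0:ℝ) < K := by exact_mod_cast hK
  have hsum_nn : 0 ≤ ∑ k ∈ S, a k := Finset.sum_nonneg (fun k hk => hgap k hk)
  have stepD : ∑ k ∈ S, a k ≤ Real.sqrt K * (G * ‖x 1 - xε‖) := by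
    have hcs : (∑ k ∈ S, a k) ^ 2 ≤ (K : ℝ) * ∑ k ∈ S, a k ^ 2 := by
      have := sq_sum_le_card_mul_sum_sq (s := S) (f := a)
      rwa [hcard] at this
    have hR : 0 ≤ Real.sqrt K * (G * ‖x 1 - xε‖) := by positivity
    have hsq : (∑ k ∈ S, a k) ^ 2 ≤ (Real.sqrt K * (G * ‖x 1 - xε‖)) ^ 2 := by
      have hKs : Real.sqrt K ^ 2 = K := Real.sq_sqrt (le_of_lt hKpos)
      calc (∑ k ∈ S, a k) ^ 2 ≤ (K : ℝ) * ∑ k ∈ S, a k ^ 2 := hcs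
        _ ≤ (K : ℝ) * (G ^ 2 * ‖x 1 - xε‖ ^ 2) := by
            exact mul_le_mul_of_nonneg_left stepC (le_of_lt hKpos)
        _ = (Real.sqrt K * (G * ‖x 1 - xε‖)) ^ 2 := by rw [mul_pow, mul_pow, hKs]
    calc ∑ k ∈ S, a k = Real.sqrt ((∑ k ∈ S, a k) ^ 2) := (Real.sqrt_sq hsum_nn).symm
      _ ≤ Real.sqrt ((Real.sqrt K * (G * ‖x 1 - xε‖)) ^ 2) := Real.sqrt_le_sqrt hsq
      _ = Real.sqrt K * (G * ‖x 1 - xε‖) := Real.sqrt_sq hR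
  -- Step E : Jensen
  intro i
  have hKne : (K:ℝ) ≠ 0 := ne_of_gt hKpos
  have jensen : f i ((1 / (K : ℝ)) • ∑ k ∈ S, x k) ≤ ∑ k ∈ S, (1 / (K : ℝ)) * f i (x k) := by
    have hsum1 : ∑ _k ∈ S, (1 / (K : ℝ)) = 1 := by
      rw [Finset.sum_const, nsmul_eq_mul]
      rw [hcard]  -- (#S:ℝ) appears as cast
      field_simp
    have := (hconv i).map_sum_le (t := S) (w := fun _ => 1 / (K : ℝ)) (p := x)
      (fun k _ => by positivity) hsum1 (fun k _ => Set.mem_univ _)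
    simpa only [smul_eq_mul, ← Finset.smul_sum] using this
  have hsum_fs : ∑ _k ∈ S, (1 / (K : ℝ)) * fs i = fs i := by
    rw [Finset.sum_const, nsmul_eq_mul, hcard]; field_simp
  have key : ∑ k ∈ S, (1 / (K : ℝ)) * f i (x k) - fs i
      ≤ (1 / (K:ℝ)) * ∑ k ∈ S, a k + ε := by
    have e1 : ∑ k ∈ S, (1 / (K : ℝ)) * f i (x k) - fs i
        = ∑ k ∈ S, (1 / (K : ℝ)) * (f i (x k) - fs i) := by
      have e1' : ∑ k ∈ S, (1 / (K:ℝ)) * (f i (x k) - fs i)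
          = (∑ k ∈ S, (1 / (K:ℝ)) * f i (x k)) - ∑ _k ∈ S, (1 / (K:ℝ)) * fs i := by
        rw [← Finset.sum_sub_distrib]
        exact Finset.sum_congr rfl (fun k _ => by ring)
      rw [e1', hsum_fs]
    have e2 : (1 / (K:ℝ)) * ∑ k ∈ S, a k + ε = ∑ k ∈ S, (1 / (K : ℝ)) * (a k + ε) := by
      rw [Finset.mul_sum]
      have : ∑ k ∈ S, (1 / (K : ℝ)) * (a k + ε) = ∑ k ∈ S, ((1 / (K : ℝ)) * a k + (1 / (K : ℝ)) * ε) :=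
        Finset.sum_congr rfl (fun k _ => by ring)
      rw [this, Finset.sum_add_distrib, Finset.sum_const, nsmul_eq_mul, hcard]
      field_simp
    rw [e1, e2]
    refine Finset.sum_le_sum (fun k hk => ?_)
    have := hI k hk i
    have : f i (x k) - fs i ≤ a k + ε := by show _ ≤ f (I k) (x k) - fs (I k) - ε + ε; linarith
    have hKinv : (0:ℝ) ≤ 1 / (K:ℝ) := by positivity
    exact mul_le_mul_of_nonneg_left this hKinv
  have hfin : (1 / (K:ℝ)) * ∑ k ∈ S, a k ≤ G * ‖x 1 - xε‖ / Real.sqrt K := by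
    have hsK : Real.sqrt K > 0 := Real.sqrt_pos.mpr hKpos
    have hKeq : Real.sqrt K * Real.sqrt K = (K:ℝ) := Real.mul_self_sqrt (le_of_lt hKpos)
    have : (1 / (K:ℝ)) * (Real.sqrt K * (G * ‖x 1 - xε‖)) = G * ‖x 1 - xε‖ / Real.sqrt K := by
      field_simp
      nlinarith [hKeq]
    rw [← this]
    exact mul_le_mul_of_nonneg_left stepD (by positivity)
  linarith [jensen]
end

section
/- Let f₁,…,f_m be convex and β-smooth with infima f_i⋆, let x_ε satisfy f_i(x_ε) − f_i⋆ ≤ ε for all i, and suppose for each k the iterates satisfy f_{I(k)}(x_k) − f_{I(k)}⋆ ≤ 2β(‖x_k − x_ε‖² − ‖x_{k+1} − x_ε‖²) + 2ε with I(k) ∈ argmax_i(f_i(x_k) − f_i⋆). Then the average iterate x̄ = (1/K)∑ x_k satisfies max_{i∈[m]}(f_i(x̄) − f_i⋆) ≤ 2β‖x₁ − x_ε‖²/K + 2ε. -/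
open scoped InnerProductSpace

/-- ε-approximate smooth trajectory bound: convex `β`-smooth functions with lower
bounds `fᵢ⋆`, an ε-optimal point `x_ε`, per-step inequality
`f_{I(k)}(x_k) − f_{I(k)}⋆ ≤ 2β(‖x_k − x_ε‖² − ‖x_{k+1} − x_ε‖²) + 2ε`, and `I(k)`
the argmax-gap index; then the average iterate satisfies
`maxᵢ (fᵢ(x̄) − fᵢ⋆) ≤ 2β‖x₁ − x_ε‖²/K + 2ε`. -/
theorem approx_smooth_trajectory_gap_bound {n m K : ℕ} (hm : 0 < m) (hK : 1 ≤ K)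
    (β ε : ℝ) (hβ : 0 < β) (hε : 0 < ε)
    (f : Fin m → EuclideanSpace ℝ (Fin n) → ℝ)
    (f' : Fin m → EuclideanSpace ℝ (Fin n) → EuclideanSpace ℝ (Fin n))
    (hgrad : ∀ i x, HasGradientAt (f i) (f' i x) x)
    (hconv : ∀ i, ConvexOn ℝ Set.univ (f i))
    (hsmooth : ∀ i x y, f i y ≤ f i x + ⟪f' i x, y - x⟫_ℝ + β / 2 * ‖x - y‖ ^ 2)
    (fs : Fin m → ℝ) (hfs : ∀ i x, fs i ≤ f i x)
    (xε : EuclideanSpace ℝ (Fin n)) (hxε : ∀ i, f i xε - fs i ≤ ε)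
    (x : ℕ → EuclideanSpace ℝ (Fin n)) (I : ℕ → Fin m)
    (hI : ∀ k ∈ Finset.Icc 1 K, ∀ i,
      f i (x k) - fs i ≤ f (I k) (x k) - fs (I k))
    (hstep : ∀ k ∈ Finset.Icc 1 K,
      f (I k) (x k) - fs (I k)
        ≤ 2 * β * (‖x k - xε‖ ^ 2 - ‖x (k + 1) - xε‖ ^ 2) + 2 * ε) :
    ∀ i, f i ((1 / (K : ℝ)) • ∑ k ∈ Finset.Icc 1 K, x k) - fs i
      ≤ 2 * β * ‖x 1 - xε‖ ^ 2 / K + 2 * ε := by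
  intro i
  have hKpos : (0:ℝ) < K := by exact_mod_cast hK
  set S := Finset.Icc 1 K with hS
  have hcard : (S.card : ℝ) = K := by simp [hS]
  -- Jensen's inequality
  have hjensen : f i ((1 / (K:ℝ)) • ∑ k ∈ S, x k) ≤ (1/(K:ℝ)) * ∑ k ∈ S, f i (x k) := by
    have hsum : (0:ℝ) < ∑ _k ∈ S, (1:ℝ) := by
      simp [hcard]; positivity
    have h := (hconv i).map_centerMass_le (t := S) (w := fun _ => (1:ℝ)) (p := x)
      (fun k _ => zero_le_one) hsum (fun k _ => Set.mem_univ _)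
    simp only [Finset.centerMass, Finset.sum_const, nsmul_eq_mul, mul_one, one_smul,
      smul_eq_mul, Function.comp] at h
    rw [hcard] at h
    simpa [one_div] using h
  -- per-step bound on each gap
  set g : ℕ → ℝ := fun k => ‖x k - xε‖ ^ 2 with hg
  have hstep' : ∀ k ∈ S, f i (x k) - fs i ≤ 2 * β * (g k - g (k+1)) + 2 * ε :=
    fun k hk => le_trans (hI k hk i) (hstep k hk)
  -- telescoping sum
  have htel : ∑ k ∈ S, (g k - g (k+1)) = g 1 - g (K+1) := by
    have h1 : ∑ k ∈ S, (g k - g (k+1)) = ∑ j ∈ Finset.range K, (g (j+1) - g (j+2)) := by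
      rw [hS, show Finset.Icc 1 K = Finset.Ico 1 (K+1) from (Finset.Ico_add_one_right_eq_Icc 1 K).symm,
        Finset.sum_Ico_eq_sum_range]
      simp [add_comm, add_assoc, add_left_comm]
    rw [h1, Finset.sum_range_sub' (fun j => g (j+1))]
  have hsumle : ∑ k ∈ S, (f i (x k) - fs i) ≤ 2 * β * g 1 + 2 * ε * K := by
    calc ∑ k ∈ S, (f i (x k) - fs i) ≤ ∑ k ∈ S, (2 * β * (g k - g (k+1)) + 2 * ε) :=
          Finset.sum_le_sum hstep'
      _ = 2 * β * (g 1 - g (K+1)) + 2 * ε * K := by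
          rw [Finset.sum_add_distrib, ← Finset.mul_sum, htel]
          simp [hS]
          ring
      _ ≤ 2 * β * g 1 + 2 * ε * K := by
          have : (0:ℝ) ≤ g (K+1) := by positivity
          nlinarith
  have hsub : ∑ k ∈ S, (f i (x k) - fs i) = (∑ k ∈ S, f i (x k)) - K * fs i := by
    rw [Finset.sum_sub_distrib, Finset.sum_const]
    simp [hS]
  calc f i ((1 / (K:ℝ)) • ∑ k ∈ S, x k) - fs i
      ≤ (1/(K:ℝ)) * ∑ k ∈ S, f i (x k) - fs i := by linarith
    _ = (1/(K:ℝ)) * (∑ k ∈ S, (f i (x k) - fs i)) := by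
        rw [hsub]; field_simp
    _ ≤ (1/(K:ℝ)) * (2 * β * g 1 + 2 * ε * K) := by
        apply mul_le_mul_of_nonneg_left hsumle; positivity
    _ = 2 * β * ‖x 1 - xε‖ ^ 2 / K + 2 * ε := by
        field_simp [hg]
        rfl
end

section
/- Let f₁,…,f_m be convex with infima f_i⋆ and suppose there exists x_ε with f_i(x_ε) − f_i⋆ ≤ ε for all i. If an online learner facing the adaptively chosen sequence f_{I(1)},…,f_{I(K)} (I(k) ∈ argmax_i(f_i(x_k) − f_i⋆)) has regret ∑_{k=1}^K(f_{I(k)}(x_k) − f_{I(k)}(x)) ≤ R(K) against every comparator x in a set containing x_ε, then the average iterate x̄ satisfies max_{i∈[m]}(f_i(x̄) − f_i⋆) ≤ R(K)/K + ε. -/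
/-- ε-approximate online-to-AMOO conversion: convex functions with lower bounds
`fᵢ⋆` and an ε-optimal common point `x_ε`; if the online learner facing the
adaptively chosen sequence `f_{I(k)}` (with `I(k)` the argmax-gap index) has regret
at most `R` against every comparator in a set containing `x_ε`, then the average
iterate satisfies `maxᵢ (fᵢ(x̄) − fᵢ⋆) ≤ R/K + ε`. -/
theorem approx_online_to_amoo {n m K : ℕ} (hm : 0 < m) (hK : 1 ≤ K)
    (ε : ℝ) (hε : 0 < ε)
    (f : Fin m → EuclideanSpace ℝ (Fin n) → ℝ)
    (hconv : ∀ i, ConvexOn ℝ Set.univ (f i))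
    (fs : Fin m → ℝ) (hfs : ∀ i x, fs i ≤ f i x)
    (xε : EuclideanSpace ℝ (Fin n)) (hxε : ∀ i, f i xε - fs i ≤ ε)
    (x : ℕ → EuclideanSpace ℝ (Fin n)) (I : ℕ → Fin m)
    (hI : ∀ k ∈ Finset.Icc 1 K, ∀ i,
      f i (x k) - fs i ≤ f (I k) (x k) - fs (I k))
    (D : Set (EuclideanSpace ℝ (Fin n))) (hD : xε ∈ D) (R : ℝ)
    (hreg : ∀ y ∈ D, ∑ k ∈ Finset.Icc 1 K, (f (I k) (x k) - f (I k) y) ≤ R) :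
    ∀ i, f i ((1 / (K : ℝ)) • ∑ k ∈ Finset.Icc 1 K, x k) - fs i ≤ R / K + ε := by

  intro i
  have hKpos : (0:ℝ) < K := by exact_mod_cast hK
  have hcard : (Finset.Icc 1 K).card = K := by simp
  -- Jensen
  have hjensen : f i ((1 / (K : ℝ)) • ∑ k ∈ Finset.Icc 1 K, x k)
      ≤ (1 / (K : ℝ)) * ∑ k ∈ Finset.Icc 1 K, f i (x k) := by
    have h := (hconv i).map_centerMass_le (t := Finset.Icc 1 K)
      (w := fun _ => (1:ℝ)) (p := x) (fun _ _ => zero_le_one)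
      (by rw [Finset.sum_const, hcard]; simpa using hKpos)
      (fun _ _ => Set.mem_univ _)
    simp only [Finset.centerMass, Finset.sum_const, hcard, nsmul_eq_mul, mul_one,
      one_smul, Function.comp, smul_eq_mul, one_div] at h
    simpa [one_div] using h
  have hsum1 : ∑ k ∈ Finset.Icc 1 K, (f i (x k) - fs i)
      ≤ ∑ k ∈ Finset.Icc 1 K, (f (I k) (x k) - fs (I k)) :=
    Finset.sum_le_sum (fun k hk => hI k hk i)
  have hsum2 : ∑ k ∈ Finset.Icc 1 K, (f (I k) (x k) - fs (I k))
      ≤ R + K * ε := by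
    have h1 : ∑ k ∈ Finset.Icc 1 K, (f (I k) (x k) - fs (I k))
        = ∑ k ∈ Finset.Icc 1 K, ((f (I k) (x k) - f (I k) xε) + (f (I k) xε - fs (I k))) := by
      apply Finset.sum_congr rfl; intro k _; ring
    rw [h1, Finset.sum_add_distrib]
    have h2 := hreg xε hD
    have h3 : ∑ k ∈ Finset.Icc 1 K, (f (I k) xε - fs (I k)) ≤ ∑ k ∈ Finset.Icc 1 K, ε :=
      Finset.sum_le_sum (fun k _ => hxε (I k))
    rw [Finset.sum_const, hcard, nsmul_eq_mul] at h3
    linarith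
  have hfin : f i ((1 / (K : ℝ)) • ∑ k ∈ Finset.Icc 1 K, x k) - fs i
      ≤ (1 / (K : ℝ)) * (R + K * ε) := by
    have : f i ((1 / (K : ℝ)) • ∑ k ∈ Finset.Icc 1 K, x k) - fs i
        ≤ (1 / (K : ℝ)) * ∑ k ∈ Finset.Icc 1 K, (f i (x k) - fs i) := by
      rw [Finset.sum_sub_distrib, Finset.sum_const, hcard, nsmul_eq_mul, mul_sub]
      have : (1 / (K:ℝ)) * ((K:ℝ) * fs i) = fs i := by field_simp
      rw [this]; linarith [hjensen]
    calc f i ((1 / (K : ℝ)) • ∑ k ∈ Finset.Icc 1 K, x k) - fs i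
        ≤ (1 / (K : ℝ)) * ∑ k ∈ Finset.Icc 1 K, (f i (x k) - fs i) := this
      _ ≤ (1 / (K : ℝ)) * (R + K * ε) := by
          apply mul_le_mul_of_nonneg_left (le_trans hsum1 hsum2) (by positivity)
  have : (1 / (K : ℝ)) * (R + K * ε) = R / K + ε := by field_simp
  linarith
end
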